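/- arXiv:0906.1629 — 5 statements merged into one kernel-verified Lean document; each statement's English description precedes it below -/
import Mathlib

section
/- For every λ ∈ M, the element e^λ − e^{−α}·e^{s(λ)} = e^λ − e^{s(λ)−α} of the group algebra ℤ[M] is divisible by 1 − e^{−α}. (This is the divisibility that makes the Demazure operator δ_α well defined.) -/
/-!
Since `s(λ) - α = λ - (c(λ) + 1) • α`, the element in question is `e^λ (1 - x^k)` with
`x = e^{-α}` and `k = c(λ) + 1`, and `1 - x` divides `1 - x^k` for every integer `k`
because `x` is invertible.
-/

open AddMonoidAlgebra

noncomputable section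

/-- The reflection `λ ↦ λ - c(λ) • α` associated to a root `α` and coroot `c`,
as an additive homomorphism of the weight lattice `M`. -/
def demazureReflection {M : Type*} [AddCommGroup M] (α : M) (c : M →+ ℤ) : M →+ M where
  toFun := fun lam => lam - c lam • α
  map_zero' := by simp
  map_add' := fun x y => by simp only [map_add, add_smul]; abel

namespace AddMonoidAlgebra

variable {R M : Type*} [Ring R] [AddGroup M]

theorem one_sub_single_dvd_one_sub_single_zsmul (a : M) (k : ℤ) :
    (1 - single a 1 : AddMonoidAlgebra R M) ∣ 1 - single (k • a) 1 := by
  induction k using Int.induction_on with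
  | zero => simp [one_def]
  | succ k ih =>
    have h : (1 - single (((k : ℤ) + 1) • a) 1 : AddMonoidAlgebra R M)
        = (1 - single a 1) * single ((k : ℤ) • a) 1 + (1 - single ((k : ℤ) • a) 1) := by
      rw [sub_mul, one_mul, single_mul_single, mul_one, add_zsmul_self]
      abel
    exact h ▸ dvd_add (dvd_mul_right _ _) ih
  | pred k ih =>
    have h : (1 - single ((-(k : ℤ) - 1) • a) 1 : AddMonoidAlgebra R M)
        = (1 - single (-(k : ℤ) • a) 1) - (1 - single a 1) * single ((-(k : ℤ) - 1) • a) 1 := by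
      rw [sub_mul, one_mul, single_mul_single, mul_one, add_zsmul_self, sub_add_cancel]
      abel
    exact h ▸ dvd_sub ih (dvd_mul_right _ _)

end AddMonoidAlgebra

theorem neg_add_demazureReflection {M : Type*} [AddCommGroup M] (α : M) (c : M →+ ℤ)
    (lam : M) : -α + demazureReflection α c lam = lam + (c lam + 1) • (-α) := by
  change -α + (lam - c lam • α) = _
  rw [add_smul, one_smul, smul_neg]
  abel

theorem demazure_divisibility_general {M : Type*} [AddCommGroup M]
    (α : M) (c : M →+ ℤ) (lam : M) :
    (1 - single (-α) 1 : AddMonoidAlgebra ℤ M) ∣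
      (single lam 1 - single (-α) 1 * single (demazureReflection α c lam) 1 :
        AddMonoidAlgebra ℤ M) := by
  have h : (single lam 1 - single (-α) 1 * single (demazureReflection α c lam) 1 :
      AddMonoidAlgebra ℤ M) = single lam 1 * (1 - single ((c lam + 1) • (-α)) 1) := by
    rw [mul_sub, mul_one, single_mul_single, single_mul_single, neg_add_demazureReflection,
      one_mul]
  rw [h]
  exact (one_sub_single_dvd_one_sub_single_zsmul (-α) (c lam + 1)).mul_left _

/-- For every `λ ∈ M`, the element `e^λ - e^{-α} e^{s(λ)}` of the group algebra `ℤ[M]`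
is divisible by `1 - e^{-α}`. -/
theorem demazure_divisibility {M : Type*} [AddCommGroup M]
    [Module.Free ℤ M] [Module.Finite ℤ M]
    (α : M) (hα : α ≠ 0) (c : M →+ ℤ) (hc : c α = 2) (lam : M) :
    (1 - single (-α) 1 : AddMonoidAlgebra ℤ M) ∣
      (single lam 1 - single (-α) 1 * single (demazureReflection α c lam) 1 :
        AddMonoidAlgebra ℤ M) :=
  demazure_divisibility_general α c lam
end
end

section
/- There exists a unique ℤ-linear endomorphism δ of the group algebra ℤ[M] such that (1 − e^{−α})·δ(u) = u − e^{−α}·s(u) for every u ∈ ℤ[M]. (This δ is Demazure's isobaric divided difference operator δ_α; uniqueness uses that ℤ[M] is an integral domain and 1 − e^{−α} ≠ 0.) -/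
/-!
Since `M` is a free `ℤ`-module it has unique sums, so `ℤ[M]` is a domain and multiplication by
`1 - e^{-α} ≠ 0` is injective: this gives uniqueness, and linearity of `δ` once it exists.
Existence is divisibility of `u - e^{-α} s(u)` by `1 - e^{-α}`, which suffices on the basis:
there `e^λ - e^{-α} e^{s(λ)} = e^λ (1 - (e^{-α})^{c(λ)+1})`, and `1 - x ∣ 1 - x^n` for a unit `x`
and every `n ∈ ℤ`.
-/

open AddMonoidAlgebra

noncomputable section

/-- The ring endomorphism of the group algebra `ℤ[M]` induced by the reflection
`s(λ) = λ - c(λ)·α`; it sends `e^λ` to `e^{s(λ)}`. -/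
def demazureReflectionAlg {M : Type*} [AddCommGroup M] (α : M) (c : M →+ ℤ) :
    AddMonoidAlgebra ℤ M →+* AddMonoidAlgebra ℤ M :=
  mapDomainRingHom ℤ (demazureReflection α c)

theorem existsUnique_linearMap_mul_eq_of_dvd {R N A : Type*} [Semiring R] [AddCommMonoid N]
    [Module R N] [Semiring A] [Module R A] [SMulCommClass R A A] {a : A} (ha : IsLeftRegular a)
    (L : N →ₗ[R] A) (hL : ∀ x, a ∣ L x) : ∃! δ : N →ₗ[R] A, ∀ x, a * δ x = L x := by
  choose d hd using hL
  let δ : N →ₗ[R] A :=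
    { toFun := d,
      map_add' := fun x y => ha (by simp only [mul_add, ← hd, map_add]),
      map_smul' := fun r x => ha (by simp only [RingHom.id_apply, mul_smul_comm, ← hd, map_smul]) }
  exact ⟨δ, fun x => (hd x).symm, fun δ' hδ' => LinearMap.ext fun x => ha ((hδ' x).trans (hd x))⟩

theorem Module.Free.uniqueSums (R M : Type*) [Semiring R] [UniqueSums R] [AddCommMonoid M]
    [Module R M] [Module.Free R M] : UniqueSums M :=
  let b := Module.Free.chooseBasis R M
  UniqueSums.of_injective_addHom b.repr.toAddMonoidHom.toAddHom b.repr.injective inferInstance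

namespace AddMonoidAlgebra

variable {k G : Type*} [Ring k]

theorem one_sub_single_ne_zero [Nontrivial k] [AddMonoid G] {a : G} (ha : a ≠ 0) :
    (1 - single a 1 : k[G]) ≠ 0 := by
  rw [sub_ne_zero, one_def]
  exact fun h => ha ((single_left_inj one_ne_zero).mp h).symm

theorem one_sub_single_dvd_one_sub_single_nsmul [AddMonoid G] (a : G) (n : ℕ) :
    (1 - single a 1 : k[G]) ∣ 1 - single (n • a) 1 := by
  simpa [single_pow] using one_sub_dvd_one_sub_pow (single a (1 : k)) n

theorem one_sub_single_dvd_one_sub_single_neg [AddGroup G] (a : G) :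
    (1 - single a 1 : k[G]) ∣ 1 - single (-a) 1 := by
  refine ⟨-single (-a) 1, ?_⟩
  rw [mul_neg, sub_mul, one_mul, single_mul_single, mul_one, add_neg_cancel, ← one_def, neg_sub]

theorem one_sub_single_dvd_one_sub_single_zsmul_s1 [AddGroup G] (a : G) (n : ℤ) :
    (1 - single a 1 : k[G]) ∣ 1 - single (n • a) 1 := by
  obtain ⟨m, rfl | rfl⟩ := Int.eq_nat_or_neg n
  · simpa using one_sub_single_dvd_one_sub_single_nsmul a m
  · rw [neg_zsmul, natCast_zsmul, ← neg_nsmul]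
    exact (one_sub_single_dvd_one_sub_single_neg a).trans
      (one_sub_single_dvd_one_sub_single_nsmul (-a) m)

end AddMonoidAlgebra

section Demazure

variable {M : Type*} [AddCommGroup M] (α : M) (c : M →+ ℤ)

def demazureNumerator : AddMonoidAlgebra ℤ M →ₗ[ℤ] AddMonoidAlgebra ℤ M :=
  LinearMap.id -
    LinearMap.mulLeft ℤ (single (-α) 1) ∘ₗ (demazureReflectionAlg α c).toIntAlgHom.toLinearMap

theorem demazureNumerator_apply (u : AddMonoidAlgebra ℤ M) :
    demazureNumerator α c u = u - single (-α) 1 * demazureReflectionAlg α c u :=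
  rfl

theorem demazureReflectionAlg_single (lam : M) (n : ℤ) :
    demazureReflectionAlg α c (single lam n) = single (lam - c lam • α) n := by
  simp [demazureReflectionAlg, demazureReflection]

theorem demazureNumerator_single (lam : M) :
    demazureNumerator α c (single lam 1) =
      single lam 1 * (1 - single ((c lam + 1) • -α) 1) := by
  rw [demazureNumerator_apply, demazureReflectionAlg_single, single_mul_single, mul_sub, mul_one,
    single_mul_single, mul_one]
  congr 2
  rw [add_smul, one_smul, smul_neg]
  abel

theorem one_sub_single_neg_dvd_demazureNumerator (u : AddMonoidAlgebra ℤ M) :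
    (1 - single (-α) 1) ∣ demazureNumerator α c u := by
  induction u using AddMonoidAlgebra.induction_linear with
  | zero => simp
  | add u v hu hv => exact map_add (demazureNumerator α c) u v ▸ dvd_add hu hv
  | single lam n =>
    rw [← mul_one n, ← smul_eq_mul, ← smul_single, map_zsmul, demazureNumerator_single,
      zsmul_eq_mul]
    exact dvd_mul_of_dvd_right (dvd_mul_of_dvd_right
      (one_sub_single_dvd_one_sub_single_zsmul_s1 _ _) _) _

end Demazure

theorem demazure_exists_unique_general {M : Type*} [AddCommGroup M]
    [Module.Free ℤ M]
    (α : M) (hα : α ≠ 0) (c : M →+ ℤ) :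
    ∃! δ : AddMonoidAlgebra ℤ M →ₗ[ℤ] AddMonoidAlgebra ℤ M,
      ∀ u : AddMonoidAlgebra ℤ M,
        (1 - single (-α) 1) * δ u = u - single (-α) 1 * demazureReflectionAlg α c u := by
  have : UniqueSums M := Module.Free.uniqueSums ℤ M
  have hreg : IsLeftRegular (1 - single (-α) 1 : AddMonoidAlgebra ℤ M) :=
    (IsRegular.of_ne_zero (one_sub_single_ne_zero (neg_ne_zero.mpr hα))).left
  exact existsUnique_linearMap_mul_eq_of_dvd hreg (demazureNumerator α c)
    (one_sub_single_neg_dvd_demazureNumerator α c)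

/-- There is a unique ℤ-linear endomorphism δ of ℤ[M] with
`(1 - e^{-α}) * δ(u) = u - e^{-α} * s(u)` for all u. -/
theorem demazure_exists_unique {M : Type*} [AddCommGroup M]
    [Module.Free ℤ M] [Module.Finite ℤ M]
    (α : M) (hα : α ≠ 0) (c : M →+ ℤ) (hc : c α = 2) :
    ∃! δ : AddMonoidAlgebra ℤ M →ₗ[ℤ] AddMonoidAlgebra ℤ M,
      ∀ u : AddMonoidAlgebra ℤ M,
        (1 - single (-α) 1) * δ u = u - single (-α) 1 * demazureReflectionAlg α c u :=
  demazure_exists_unique_general α hα c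
end
end

section
/- The Demazure operator δ satisfies the twisted Leibniz rule: δ(u·v) = δ(u)·v + s(u)·(δ(v) − v) for all u, v ∈ ℤ[M]. -/
open AddMonoidAlgebra

noncomputable section

/-! Since `M` is torsion-free, `ℤ[M]` is a domain, so `1 - e^{-α}` can be cancelled; after
multiplying by it, both sides of the rule are expanded with the defining relation of `δ`
at `uv`, `u` and `v`, and agree because `s` is multiplicative. -/

theorem twisted_leibniz_of_one_sub_mul_eq {R : Type*} [CommRing R] (s : R →+* R) (t : R)
    (δ : R → R) (ht : IsLeftRegular (1 - t)) (hδ : ∀ u, (1 - t) * δ u = u - t * s u)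
    (u v : R) : δ (u * v) = δ u * v + s u * (δ v - v) := by
  apply ht
  have huv := hδ (u * v)
  rw [map_mul] at huv
  linear_combination huv - v * hδ u - s u * hδ v

theorem Module.Free.uniqueSums_of_int {M : Type*} [AddCommGroup M] [Module.Free ℤ M] :
    UniqueSums M :=
  UniqueSums.of_injective_addHom (Module.Free.chooseBasis ℤ M).repr.toAddMonoidHom.toAddHom
    (Module.Free.chooseBasis ℤ M).repr.injective inferInstance

theorem AddMonoidAlgebra.one_sub_single_ne_zero_s4 {R M : Type*} [Ring R] [Nontrivial R]
    [AddMonoid M] {a : M} (ha : a ≠ 0) : (1 - single a 1 : AddMonoidAlgebra R M) ≠ 0 := by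
  rw [sub_ne_zero, one_def]
  exact fun h => ha ((single_left_injective one_ne_zero h).symm)

theorem demazure_twisted_leibniz_general {M : Type*} [AddCommGroup M]
    [Module.Free ℤ M]
    (α : M) (hα : α ≠ 0) (c : M →+ ℤ)
    (δ : AddMonoidAlgebra ℤ M →ₗ[ℤ] AddMonoidAlgebra ℤ M)
    (hδ : ∀ u : AddMonoidAlgebra ℤ M,
      (1 - single (-α) 1) * δ u = u - single (-α) 1 * demazureReflectionAlg α c u) :
    ∀ u v : AddMonoidAlgebra ℤ M,
      δ (u * v) = δ u * v + demazureReflectionAlg α c u * (δ v - v) := by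
  have : UniqueSums M := Module.Free.uniqueSums_of_int
  have hreg : IsLeftRegular (1 - single (-α) 1 : AddMonoidAlgebra ℤ M) :=
    IsLeftCancelMulZero.mul_left_cancel_of_ne_zero (one_sub_single_ne_zero_s4 (neg_ne_zero.mpr hα))
  exact twisted_leibniz_of_one_sub_mul_eq _ _ δ hreg hδ

/-- Twisted Leibniz rule: δ(uv) = δ(u)v + s(u)(δ(v) - v). -/
theorem demazure_twisted_leibniz {M : Type*} [AddCommGroup M]
    [Module.Free ℤ M] [Module.Finite ℤ M]
    (α : M) (hα : α ≠ 0) (c : M →+ ℤ) (hc : c α = 2)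
    (δ : AddMonoidAlgebra ℤ M →ₗ[ℤ] AddMonoidAlgebra ℤ M)
    (hδ : ∀ u : AddMonoidAlgebra ℤ M,
      (1 - single (-α) 1) * δ u = u - single (-α) 1 * demazureReflectionAlg α c u) :
    ∀ u v : AddMonoidAlgebra ℤ M,
      δ (u * v) = δ u * v + demazureReflectionAlg α c u * (δ v - v) :=
  demazure_twisted_leibniz_general α hα c δ hδ
end
end

section
/- Pittie–Steinberg theorem for SU(2): the Laurent polynomial ring R = LaurentPolynomial ℤ is a free module of rank 2 over the subalgebra A = Algebra.adjoin ℤ {T 1 + T (−1)} (the invariant subring ℤ[x + x⁻¹]) with basis {1, T 1}; that is, for every u ∈ R there exist unique p, q ∈ A such that u = p + q·(T 1). -/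
/-!
Write `s = T 1 + T (-1)` and `A = R[s]`. Multiplication by `T 1` and by `T (-1)` preserves the
`A`-span of `1` and `T 1`, because `T 1 * T 1 = s * T 1 - 1` and `T (-1) = s - T 1`; since that span
contains `1`, it contains every monomial, hence everything. For uniqueness, the involution
`invert : T n ↦ T (-n)` fixes `A` pointwise, so from `p + q * T 1 = 0` with `p, q ∈ A` it also gives
`p + q * T (-1) = 0`; subtracting, `q * (T 1 - T (-1)) = 0`, and `q = 0` since `R[T;T⁻¹]` is a domain.
-/

open LaurentPolynomial

noncomputable section

namespace LaurentPolynomial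

variable (R : Type*) [CommRing R]

abbrev adjoinTAddTNeg : Subalgebra R R[T;T⁻¹] :=
  Algebra.adjoin R {T 1 + T (-1)}

variable {R}

lemma T_add_T_neg_mem_adjoinTAddTNeg : (T 1 + T (-1) : R[T;T⁻¹]) ∈ adjoinTAddTNeg R :=
  Algebra.subset_adjoin rfl

lemma invert_eq_self_of_mem_adjoinTAddTNeg {f : R[T;T⁻¹]} (hf : f ∈ adjoinTAddTNeg R) :
    invert f = f := by
  refine AlgHom.adjoin_le_equalizer invert.toAlgHom (AlgHom.id R _) ?_ hf
  rintro _ rfl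
  simp [add_comm]

lemma T_neg_one_mul_T_one : (T (-1) * T 1 : R[T;T⁻¹]) = 1 := by
  rw [← T_add, neg_add_cancel, T_zero]

lemma T_one_mul_mem_span {f : R[T;T⁻¹]} (hf : f ∈ Submodule.span (adjoinTAddTNeg R) {1, T 1}) :
    T 1 * f ∈ Submodule.span (adjoinTAddTNeg R) {1, T 1} := by
  obtain ⟨p, q, rfl⟩ := Submodule.mem_span_pair.mp hf
  refine Submodule.mem_span_pair.mpr
    ⟨-q, p + q * (⟨_, T_add_T_neg_mem_adjoinTAddTNeg⟩ : adjoinTAddTNeg R), ?_⟩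
  simp only [Subalgebra.smul_def, smul_eq_mul, Subalgebra.coe_add, Subalgebra.coe_mul,
    Subalgebra.coe_neg]
  linear_combination (q : R[T;T⁻¹]) * T_neg_one_mul_T_one (R := R)

lemma T_neg_one_mul_mem_span {f : R[T;T⁻¹]}
    (hf : f ∈ Submodule.span (adjoinTAddTNeg R) {1, T 1}) :
    T (-1) * f ∈ Submodule.span (adjoinTAddTNeg R) {1, T 1} := by
  obtain ⟨p, q, rfl⟩ := Submodule.mem_span_pair.mp hf
  refine Submodule.mem_span_pair.mpr
    ⟨p * (⟨_, T_add_T_neg_mem_adjoinTAddTNeg⟩ : adjoinTAddTNeg R) + q, -p, ?_⟩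
  simp only [Subalgebra.smul_def, smul_eq_mul, Subalgebra.coe_add, Subalgebra.coe_mul,
    Subalgebra.coe_neg]
  linear_combination -(q : R[T;T⁻¹]) * T_neg_one_mul_T_one (R := R)

lemma T_mem_span (n : ℤ) : (T n : R[T;T⁻¹]) ∈ Submodule.span (adjoinTAddTNeg R) {1, T 1} := by
  induction n using Int.induction_on with
  | zero => exact Submodule.subset_span (by simp)
  | succ n ih => simpa only [T_add, mul_comm (T (n : ℤ))] using T_one_mul_mem_span ih
  | pred n ih => simpa only [T_sub, mul_comm (T (-(n : ℤ)))] using T_neg_one_mul_mem_span ih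

lemma span_one_T_one : Submodule.span (adjoinTAddTNeg R) {1, (T 1 : R[T;T⁻¹])} = ⊤ := by
  refine Submodule.eq_top_iff'.mpr fun f ↦ ?_
  induction f using LaurentPolynomial.induction_on' with
  | add f g hf hg => exact add_mem hf hg
  | C_mul_T n a =>
    have hC : C a ∈ adjoinTAddTNeg R := C_eq_algebraMap a ▸ Subalgebra.algebraMap_mem _ a
    exact Submodule.smul_of_tower_mem _ (⟨C a, hC⟩ : adjoinTAddTNeg R) (T_mem_span n)

lemma linearIndependent_one_T_one [IsDomain R] :
    LinearIndependent (adjoinTAddTNeg R) ![1, (T 1 : R[T;T⁻¹])] := by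
  refine LinearIndependent.pair_iff.mpr fun p q h ↦ ?_
  simp only [Subalgebra.smul_def, smul_eq_mul, mul_one] at h
  have h_inv : (p : R[T;T⁻¹]) + (q : R[T;T⁻¹]) * T (-1) = 0 := by
    simpa [invert_eq_self_of_mem_adjoinTAddTNeg p.2, invert_eq_self_of_mem_adjoinTAddTNeg q.2]
      using congrArg invert h
  have hT : (T 1 - T (-1) : R[T;T⁻¹]) ≠ 0 := by
    intro h0
    simpa using congrArg (fun f : R[T;T⁻¹] ↦ f.coeff 1) (sub_eq_zero.mp h0)
  have hq : q = 0 := by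
    have : (q : R[T;T⁻¹]) * (T 1 - T (-1)) = 0 := by linear_combination h - h_inv
    exact Subtype.ext ((mul_eq_zero.mp this).resolve_right hT)
  subst hq
  exact ⟨Subtype.ext (by simpa using h), rfl⟩

end LaurentPolynomial

/-- Pittie–Steinberg theorem for SU(2): the Laurent polynomial ring ℤ[x, x⁻¹] is a free
module of rank 2 over its subalgebra ℤ[x + x⁻¹] with basis {1, x}: every u can be
written uniquely as u = p + q·x with p, q ∈ ℤ[x + x⁻¹]. -/
theorem pittie_steinberg_su2 (u : LaurentPolynomial ℤ) :
    ∃! pq : (Algebra.adjoin ℤ ({T 1 + T (-1)} : Set (LaurentPolynomial ℤ))) ×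
            (Algebra.adjoin ℤ ({T 1 + T (-1)} : Set (LaurentPolynomial ℤ))),
      u = (pq.1 : LaurentPolynomial ℤ) + (pq.2 : LaurentPolynomial ℤ) * T 1 := by
  have h_span : u ∈ Submodule.span (adjoinTAddTNeg ℤ) {1, T 1} := by
    rw [span_one_T_one]; exact Submodule.mem_top
  obtain ⟨p, q, hu⟩ := Submodule.mem_span_pair.mp h_span
  simp only [Subalgebra.smul_def, smul_eq_mul, mul_one] at hu
  refine ⟨(p, q), hu.symm, ?_⟩
  rintro ⟨p', q'⟩ hu'
  obtain ⟨rfl, rfl⟩ := linearIndependent_one_T_one.eq_of_pair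
    (s := p') (t := q') (s' := p) (t' := q) <| by
      simpa only [Subalgebra.smul_def, smul_eq_mul, mul_one] using hu'.symm.trans hu.symm
  rfl
end
end

section
/- Invariants of the Weyl group action for SU(2): let τ be the ring automorphism of R = LaurentPolynomial ℤ determined by τ(T n) = T (−n) for all n ∈ ℤ (the inversion x ↦ x⁻¹). Then for u ∈ R one has τ(u) = u if and only if u lies in the subalgebra Algebra.adjoin ℤ {T 1 + T (−1)}; that is, the τ-invariant subring of ℤ[x, x⁻¹] is exactly ℤ[x + x⁻¹]. -/
open LaurentPolynomial

noncomputable section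

/-!
Write `x = T 1`. A Laurent polynomial fixed by `x ↦ x⁻¹` has symmetric coefficients, so it is its
constant term plus `p + invert p`, where `p` is its part in positive degrees. Each monomial
`a xⁿ` of `p` contributes `a (xⁿ + x⁻ⁿ)`, which is the Dickson polynomial `D_n(·, 1)` evaluated
at `x + x⁻¹`. Finally, every ring endomorphism of `ℤ[x, x⁻¹]` is `ℤ`-linear, so `τ` is `invert`.
-/

open Polynomial in
theorem pow_add_pow_mem_adjoin_add {R A : Type*} [CommRing R] [CommRing A] [Algebra R A]
    {x y : A} (h : x * y = 1) (n : ℕ) : x ^ n + y ^ n ∈ Algebra.adjoin R {x + y} := by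
  rw [Algebra.adjoin_singleton_eq_range_aeval]
  refine ⟨dickson 1 (1 : R) n, ?_⟩
  rw [AlgHom.toRingHom_eq_coe, RingHom.coe_coe, aeval_def, ← eval_map, map_dickson, map_one,
    dickson_one_one_eval_add_inv x y h]

namespace LaurentPolynomial

section CommRing

variable {R : Type*} [CommRing R]

theorem T_add_T_neg_mem_adjoin (n : ℤ) :
    (T n + T (-n) : R[T;T⁻¹]) ∈ Algebra.adjoin R {T 1 + T (-1)} := by
  have key (k : ℕ) : (T k + T (-k) : R[T;T⁻¹]) ∈ Algebra.adjoin R {T 1 + T (-1)} := by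
    have h : (T 1 * T (-1) : R[T;T⁻¹]) = 1 := by rw [← T_add, add_neg_cancel, T_zero]
    simpa [T_pow] using pow_add_pow_mem_adjoin_add (R := R) h k
  obtain ⟨k, rfl | rfl⟩ := n.eq_nat_or_neg
  · exact key k
  · simpa [add_comm] using key k

theorem add_invert_mem_adjoin (p : R[T;T⁻¹]) :
    p + invert p ∈ Algebra.adjoin R {T 1 + T (-1)} := by
  induction p using LaurentPolynomial.induction_on' with
  | add p q hp hq => simpa [add_add_add_comm] using add_mem hp hq
  | C_mul_T n a =>
    rw [map_mul, invert_C, invert_T, ← mul_add, ← smul_eq_C_mul]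
    exact Subalgebra.smul_mem _ (T_add_T_neg_mem_adjoin n) a

theorem invert_eq_self_of_mem_adjoin {u : R[T;T⁻¹]} (hu : u ∈ Algebra.adjoin R {T 1 + T (-1)}) :
    invert u = u :=
  AlgHom.adjoin_le_equalizer invert.toAlgHom (AlgHom.id R _)
    (by simp [Set.EqOn, add_comm]) hu

def posPart (u : R[T;T⁻¹]) : R[T;T⁻¹] := .ofCoeff (u.coeff.filter (0 < ·))

theorem eq_posPart_add_invert_add_C {u : R[T;T⁻¹]} (hu : invert u = u) :
    u = posPart u + invert (posPart u) + C (u.coeff 0) := by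
  have hsymm (m : ℤ) : u.coeff (-m) = u.coeff m := by rw [← invert_apply, hu]
  ext m
  simp only [posPart, AddMonoidAlgebra.coeff_add, Finsupp.add_apply, invert_apply,
    Finsupp.filter_apply, C_apply]
  rcases lt_trichotomy 0 m with hm | rfl | hm
  · simp [hm, hm.not_gt, hm.ne']
  · simp
  · simp [hm, hm.not_gt, hm.ne, hsymm]

theorem invert_eq_self_iff_mem_adjoin (u : R[T;T⁻¹]) :
    invert u = u ↔ u ∈ Algebra.adjoin R {T 1 + T (-1)} := by
  refine ⟨fun hu => ?_, invert_eq_self_of_mem_adjoin⟩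
  rw [eq_posPart_add_invert_add_C hu]
  refine add_mem (add_invert_mem_adjoin _) ?_
  simpa [algebraMap_apply] using
    (Algebra.adjoin R {(T 1 + T (-1) : R[T;T⁻¹])}).algebraMap_mem (u.coeff 0)

end CommRing

theorem apply_eq_invert_of_map_T {F : Type*} [FunLike F ℤ[T;T⁻¹] ℤ[T;T⁻¹]]
    [RingHomClass F ℤ[T;T⁻¹] ℤ[T;T⁻¹]] (f : F) (hf : ∀ n, f (T n) = T (-n)) (u : ℤ[T;T⁻¹]) :
    f u = invert u := by
  induction u using LaurentPolynomial.induction_on' with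
  | add p q hp hq => rw [map_add, map_add, hp, hq]
  | C_mul_T n a => rw [map_mul, map_mul, hf, invert_T, eq_intCast C a, map_intCast, map_intCast]

end LaurentPolynomial

/-- Weyl invariants for SU(2): if τ is the ring automorphism of ℤ[x, x⁻¹] with
τ(xⁿ) = x⁻ⁿ, then τ(u) = u if and only if u ∈ ℤ[x + x⁻¹]. -/
theorem weyl_invariants_su2
    (τ : LaurentPolynomial ℤ ≃+* LaurentPolynomial ℤ)
    (hτ : ∀ n : ℤ, τ (T n) = T (-n)) :
    ∀ u : LaurentPolynomial ℤ,
      τ u = u ↔ u ∈ Algebra.adjoin ℤ ({T 1 + T (-1)} : Set (LaurentPolynomial ℤ)) := by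
  intro u
  rw [apply_eq_invert_of_map_T τ hτ u, invert_eq_self_iff_mem_adjoin]
end
end
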